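/- arXiv:2107.08023 — 3 statements merged into one kernel-verified Lean document; each statement's English description precedes it below -/
import Mathlib

section
/- Let n ≥ 1 and 1 ≤ k ≤ n, and let Z_1,…,Z_n be exchangeable random variables. Then for every s, P(Z_{n-k+1:n} > s) = 1 − Σ_{i=n-k+1}^{n} (−1)^{i−n+k−1} C(n,i) C(i−1,n−k) P(Z_1 ≤ s, …, Z_i ≤ s). -/
open MeasureTheory ProbabilityTheory

/-!
Write `N ω = #{j | Z j ω ≤ s}`. The order statistic `Z_{n-k+1:n}` exceeds `s` exactly when
`N ≤ n - k`, and with `r = n - k` the alternating binomial identity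
`[r < N] = ∑_{i=r+1}^{n} (-1)^(i-r-1) C(i-1, r) C(N, i)` holds pointwise. Since `C(N, i)` counts
the `i`-sets `T` of indices with `Z j ≤ s` for all `j ∈ T`, taking expectations gives a sum of
`P(∀ j ∈ T, Z j ≤ s)` over `#T = i`; by exchangeability all `C(n, i)` of these equal
`P(Z_1 ≤ s, …, Z_i ≤ s)`.
-/

/-- `orderStat Z j ω` is the `j`-th smallest value (1-indexed) among `Z 0 ω, …, Z (n-1) ω`. -/
noncomputable def orderStat {Ω : Type*} {n : ℕ} (Z : Fin n → Ω → ℝ) (j : ℕ) (ω : Ω) : ℝ :=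
  ((List.ofFn fun i => Z i ω).mergeSort (fun x y => x ≤ y)).getD (j - 1) 0

open Finset

theorem Finset.sum_Icc_mul_choose_of_le {R : Type*} [NonAssocSemiring R] (f : ℕ → R) (a : ℕ)
    {N M : ℕ} (hNM : N ≤ M) :
    ∑ i ∈ Icc a M, f i * N.choose i = ∑ i ∈ Icc a N, f i * N.choose i := by
  refine (sum_subset (Icc_subset_Icc_right hNM) fun i hi hiN => ?_).symm
  rw [Nat.choose_eq_zero_of_lt (by grind), Nat.cast_zero, mul_zero]

theorem Int.alternating_sum_Icc_choose_mul_choose (r N : ℕ) :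
    ∑ j ∈ Icc r N, (-1 : ℤ) ^ (j - r) * N.choose j * j.choose r = if N = r then 1 else 0 := by
  rcases lt_or_ge N r with hNr | hrN
  · rw [Icc_eq_empty_of_lt hNr, sum_empty, if_neg hNr.ne]
  have hshift : Icc r N = (Finset.range (N - r + 1)).map (addRightEmbedding r) := by
    rw [Nat.range_succ_eq_Icc_zero, map_add_right_Icc, zero_add, Nat.sub_add_cancel hrN]
  have hfactor : ∀ t ∈ Finset.range (N - r + 1),
      (-1 : ℤ) ^ (t + r - r) * N.choose (t + r) * (t + r).choose r
        = N.choose r * ((-1) ^ t * (N - r).choose t) := by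
    intro t _
    rw [mul_assoc, ← Nat.cast_mul, Nat.choose_mul (Nat.le_add_left r t), Nat.add_sub_cancel]
    push_cast; ring
  rw [hshift, sum_map]
  simp only [addRightEmbedding_apply]
  rw [sum_congr rfl hfactor, ← mul_sum, Int.alternating_sum_range_choose]
  rcases eq_or_ne N r with rfl | hNr
  · simp
  · simp [hNr, Nat.sub_ne_zero_of_lt (lt_of_le_of_ne hrN hNr.symm)]

theorem Int.alternating_sum_Icc_choose_pred_mul_choose (r N : ℕ) :
    ∑ i ∈ Icc (r + 1) N, (-1 : ℤ) ^ (i - (r + 1)) * (i - 1).choose r * N.choose i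
      = if r < N then 1 else 0 := by
  induction N with
  | zero => simp
  | succ N ih =>
    have hpascal : ∀ i ∈ Icc (r + 1) (N + 1),
        (-1 : ℤ) ^ (i - (r + 1)) * (i - 1).choose r * (N + 1).choose i
          = (-1) ^ (i - (r + 1)) * (i - 1).choose r * N.choose i
            + (-1) ^ (i - (r + 1)) * (i - 1).choose r * N.choose (i - 1) := by
      intro i hi
      rw [Nat.choose_succ_left _ _ ((Nat.succ_pos r).trans_le (mem_Icc.1 hi).1)]
      push_cast; ring
    have hupper :
        ∑ i ∈ Icc (r + 1) (N + 1),
          (-1 : ℤ) ^ (i - (r + 1)) * (i - 1).choose r * N.choose (i - 1)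
        = ∑ j ∈ Icc r N, (-1 : ℤ) ^ (j - r) * N.choose j * j.choose r := by
      rw [← map_add_right_Icc, sum_map]
      refine sum_congr rfl fun j _ => ?_
      simp only [addRightEmbedding_apply, Nat.add_sub_cancel, Nat.add_sub_add_right]
      ring
    rw [sum_congr rfl hpascal, sum_add_distrib, sum_Icc_mul_choose_of_le _ _ N.le_succ, hupper, ih,
      Int.alternating_sum_Icc_choose_mul_choose]
    grind

theorem Int.alternating_sum_Icc_choose_pred_mul_choose_of_le (r : ℕ) {N M : ℕ} (hNM : N ≤ M) :
    ∑ i ∈ Icc (r + 1) M, (-1 : ℤ) ^ (i - (r + 1)) * (i - 1).choose r * N.choose i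
      = if r < N then 1 else 0 := by
  rw [sum_Icc_mul_choose_of_le _ _ hNM, Int.alternating_sum_Icc_choose_pred_mul_choose]

theorem Finset.choose_card_filter_eq_card_filter_powersetCard {ι : Type*} (s : Finset ι)
    (p : ι → Prop) [DecidablePred p] (i : ℕ) :
    (#{j ∈ s | p j}).choose i = #{T ∈ s.powersetCard i | ∀ j ∈ T, p j} := by
  rw [← card_powersetCard]
  congr 1
  ext T
  simp only [mem_powersetCard, mem_filter, subset_iff]
  grind

theorem List.Pairwise.getD_le_iff_lt_countP {α : Type*} [LinearOrder α] {l : List α}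
    (hl : l.Pairwise (· ≤ ·)) (d x : α) {j : ℕ} (hj : j < l.length) :
    l.getD j d ≤ x ↔ j < l.countP (· ≤ x) := by
  induction l generalizing j with
  | nil => simp at hj
  | cons a l ih =>
    rw [List.pairwise_cons] at hl
    by_cases hax : a ≤ x
    · cases j with
      | zero => simp [hax]
      | succ j =>
        rw [List.getD_cons_succ, List.countP_cons_of_pos (by simpa using hax),
          ih hl.2 (by simpa using hj), Nat.add_lt_add_iff_right]
    · have hall : ∀ b ∈ a :: l, ¬b ≤ x := by
        simp only [List.mem_cons, forall_eq_or_imp]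
        exact ⟨hax, fun b hb hbx => hax ((hl.1 b hb).trans hbx)⟩
      rw [List.countP_eq_zero.2 (by simpa using hall), List.getD_eq_getElem _ _ hj]
      simpa using hall _ (List.getElem_mem hj)

theorem List.countP_ofFn {α : Type*} {n : ℕ} (f : Fin n → α)
    (p : α → Prop) [DecidablePred p] : (List.ofFn f).countP (p ·) = #{i | p (f i)} := by
  rw [← Multiset.coe_countP, ← Fin.univ_val_map, Multiset.countP_map, card_def, filter_val]

theorem orderStat_le_iff {Ω : Type*} {n : ℕ} (Z : Fin n → Ω → ℝ) {j : ℕ} (hj1 : 1 ≤ j)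
    (hjn : j ≤ n) (ω : Ω) (s : ℝ) : orderStat Z j ω ≤ s ↔ j ≤ #{i | Z i ω ≤ s} := by
  have hsorted := List.pairwise_mergeSort' (fun x y : ℝ => x ≤ y) (List.ofFn fun i => Z i ω)
  rw [orderStat, hsorted.getD_le_iff_lt_countP _ _
    (by rw [List.length_mergeSort, List.length_ofFn]; omega),
    (List.mergeSort_perm _ _).countP_eq, List.countP_ofFn]
  omega

def Exchangeable {Ω ι α : Type*} [MeasurableSpace Ω] [MeasurableSpace α] (Z : ι → Ω → α)
    (P : Measure Ω) : Prop :=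
  ∀ σ : Equiv.Perm ι, P.map (fun ω i => Z (σ i) ω) = P.map (fun ω i => Z i ω)

section

variable {Ω ι α : Type*} [MeasurableSpace Ω] [MeasurableSpace α] {P : Measure Ω}
  {Z : ι → Ω → α} {p : α → Prop}

theorem measurableSet_forall_mem_finset (hZm : ∀ i, Measurable (Z i))
    (hp : MeasurableSet {a | p a}) (T : Finset ι) :
    MeasurableSet {ω | ∀ j ∈ T, p (Z j ω)} := by
  have hinter : {ω | ∀ j ∈ T, p (Z j ω)} = ⋂ j ∈ T, Z j ⁻¹' {a | p a} := by ext; simp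
  exact hinter ▸ Finset.measurableSet_biInter T fun j _ => hZm j hp

theorem Exchangeable.measure_forall_mem_eq (hZ : Exchangeable Z P) (hZm : ∀ i, Measurable (Z i))
    (hp : MeasurableSet {a | p a}) {T T' : Finset ι} (hcard : #T = #T') :
    P {ω | ∀ j ∈ T, p (Z j ω)} = P {ω | ∀ j ∈ T', p (Z j ω)} := by
  obtain ⟨σ, hσ⟩ := Equiv.Perm.exists_map_finset_eq T' T hcard.symm
  have hS : MeasurableSet {f : ι → α | ∀ j ∈ T', p (f j)} :=
    measurableSet_forall_mem_finset (Z := fun j (f : ι → α) => f j) measurable_pi_apply hp T'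
  have hpre : {ω | ∀ j ∈ T, p (Z j ω)}
      = (fun ω i => Z (σ i) ω) ⁻¹' {f | ∀ j ∈ T', p (f j)} := by
    ext ω
    simp only [← hσ, forall_mem_map, Set.mem_ofPred_eq, Set.mem_preimage]
    rfl
  rw [hpre, ← Measure.map_apply (measurable_pi_lambda _ fun j => hZm (σ j)) hS, hZ σ,
    Measure.map_apply (measurable_pi_lambda _ hZm) hS]
  rfl

variable [Fintype ι]

theorem Exchangeable.sum_powersetCard_measureReal_eq (hZ : Exchangeable Z P)
    (hZm : ∀ i, Measurable (Z i)) (hp : MeasurableSet {a | p a}) {i : ℕ} {T₀ : Finset ι}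
    (hT₀ : #T₀ = i) :
    ∑ T ∈ powersetCard i univ, P.real {ω | ∀ j ∈ T, p (Z j ω)}
      = (Fintype.card ι).choose i * P.real {ω | ∀ j ∈ T₀, p (Z j ω)} := by
  have hterm : ∀ T ∈ powersetCard i univ,
      P.real {ω | ∀ j ∈ T, p (Z j ω)} = P.real {ω | ∀ j ∈ T₀, p (Z j ω)} := by
    intro T hT
    rw [measureReal_def, measureReal_def,
      hZ.measure_forall_mem_eq hZm hp ((mem_powersetCard.1 hT).2.trans hT₀.symm)]
  rw [sum_congr rfl hterm, sum_const, card_powersetCard, card_univ, nsmul_eq_mul]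

variable [DecidablePred p]

theorem measurable_card_filter (hZm : ∀ i, Measurable (Z i)) (hp : MeasurableSet {a | p a}) :
    Measurable fun ω => #{j | p (Z j ω)} := by
  simp only [card_filter]
  exact Finset.measurable_sum _ fun j _ =>
    Measurable.ite (hZm j hp) measurable_const measurable_const

theorem measureReal_lt_card_filter_eq_sum [IsFiniteMeasure P] (hZm : ∀ i, Measurable (Z i))
    (hp : MeasurableSet {a | p a}) (r : ℕ) :
    P.real {ω | r < #{j | p (Z j ω)}}
      = ∑ i ∈ Icc (r + 1) (Fintype.card ι), (-1 : ℝ) ^ (i - (r + 1)) * (i - 1).choose r *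
          ∑ T ∈ powersetCard i univ, P.real {ω | ∀ j ∈ T, p (Z j ω)} := by
  have hA := measurableSet_forall_mem_finset hZm hp
  have hAint :
      ∀ T : Finset ι, Integrable ({ω | ∀ j ∈ T, p (Z j ω)}.indicator (1 : Ω → ℝ)) P :=
    fun T => (integrable_const 1).indicator (hA T)
  have hpoint : {ω | r < #{j | p (Z j ω)}}.indicator (1 : Ω → ℝ) = fun ω =>
      ∑ i ∈ Icc (r + 1) (Fintype.card ι), (-1 : ℝ) ^ (i - (r + 1)) * (i - 1).choose r *
        ∑ T ∈ powersetCard i univ, {ω | ∀ j ∈ T, p (Z j ω)}.indicator 1 ω := by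
    ext ω
    simp only [Set.indicator_apply, Set.mem_ofPred_eq, Pi.one_apply, sum_boole,
      ← choose_card_filter_eq_card_filter_powersetCard]
    exact_mod_cast
      (Int.alternating_sum_Icc_choose_pred_mul_choose_of_le r (card_filter_le _ _)).symm
  have hmeas : MeasurableSet {ω | r < #{j | p (Z j ω)}} :=
    measurableSet_lt measurable_const (measurable_card_filter hZm hp)
  rw [← integral_indicator_one hmeas, hpoint, integral_finsetSum _ fun i _ =>
    (integrable_finsetSum _ fun T _ => hAint T).const_mul _]
  refine sum_congr rfl fun i _ => ?_
  rw [integral_const_mul, integral_finsetSum _ fun T _ => hAint T]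
  simp only [integral_indicator_one (hA _)]

end

theorem reliability_k_out_of_n_exchangeable_general
    {Ω : Type*} [MeasurableSpace Ω] (P : Measure Ω) [IsProbabilityMeasure P]
    (n k : ℕ) (hn : 1 ≤ n) (hk1 : 1 ≤ k)
    (Z : Fin n → Ω → ℝ) (hZm : ∀ i, Measurable (Z i))
    (hexch : ∀ σ : Equiv.Perm (Fin n),
      Measure.map (fun ω => fun i => Z (σ i) ω) P = Measure.map (fun ω => fun i => Z i ω) P)
    (s : ℝ) :
    (P {ω | s < orderStat Z (n - k + 1) ω}).toReal
      = 1 - ∑ i ∈ Finset.Icc (n - k + 1) n,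
          (-1 : ℝ) ^ (i - (n - k + 1)) * (n.choose i) * ((i - 1).choose (n - k)) *
            (P {ω | ∀ j : Fin n, (j : ℕ) < i → Z j ω ≤ s}).toReal := by
  have hp : MeasurableSet {a : ℝ | a ≤ s} := measurableSet_Iic
  have hevent : {ω | s < orderStat Z (n - k + 1) ω} = {ω | n - k < #{j | Z j ω ≤ s}}ᶜ := by
    ext ω
    rw [Set.mem_ofPred_eq, Set.mem_compl_iff, Set.mem_ofPred_eq, ← not_le,
      orderStat_le_iff Z (j := n - k + 1) (by omega) (by omega), Nat.add_one_le_iff]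
  have hprefix : ∀ i ≤ n, #({j | (j : ℕ) < i} : Finset (Fin n)) = i := fun i hi => by
    rw [Fin.card_filter_val_lt, min_eq_right hi]
  rw [hevent, ← measureReal_def,
    probReal_compl_eq_one_sub (measurableSet_lt measurable_const (measurable_card_filter hZm hp)),
    measureReal_lt_card_filter_eq_sum hZm hp]
  simp only [Fintype.card_fin]
  congr 1
  refine sum_congr rfl fun i hi => ?_
  rw [Exchangeable.sum_powersetCard_measureReal_eq hexch hZm hp (hprefix i (mem_Icc.1 hi).2),
    ← measureReal_def]
  simp only [mem_filter, mem_univ, true_and, Fintype.card_fin]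
  ring

theorem reliability_k_out_of_n_exchangeable
    {Ω : Type*} [MeasurableSpace Ω] (P : Measure Ω) [IsProbabilityMeasure P]
    (n k : ℕ) (hn : 1 ≤ n) (hk1 : 1 ≤ k) (hkn : k ≤ n)
    (Z : Fin n → Ω → ℝ) (hZm : ∀ i, Measurable (Z i))
    (hexch : ∀ σ : Equiv.Perm (Fin n),
      Measure.map (fun ω => fun i => Z (σ i) ω) P = Measure.map (fun ω => fun i => Z i ω) P)
    (s : ℝ) :
    (P {ω | s < orderStat Z (n - k + 1) ω}).toReal
      = 1 - ∑ i ∈ Finset.Icc (n - k + 1) n,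
          (-1 : ℝ) ^ (i - (n - k + 1)) * (n.choose i) * ((i - 1).choose (n - k)) *
            (P {ω | ∀ j : Fin n, (j : ℕ) < i → Z j ω ≤ s}).toReal :=
  reliability_k_out_of_n_exchangeable_general P n k hn hk1 Z hZm hexch s
end

section
/- Let n ≥ 1, 1 ≤ k ≤ n, and let Z_1,…,Z_n be exchangeable integrable random variables. Let t ≥ 0 be such that P(Z_{1:n} > t) > 0. Then E(Z_{n-k+1:n} − t | Z_{1:n} > t) = (1/P(Z_{1:n}>t)) ∫_0^∞ [ 1 − Σ_{j=1}^{n} (−1)^{j−1} C(n,j) P(Z_1 ≤ t+x, …, Z_j ≤ t+x) ] dx + (1/P(Z_{1:n}>t)) ∫_0^∞ Σ_{i=1}^{n−k} C(n,i) [ P(Z_1 ≤ t+x, …, Z_i ≤ t+x) − Σ_{j=1}^{i} (−1)^{j+1} C(i,j) P(Z_1 ≤ t, …, Z_j ≤ t, Z_{j+1} ≤ t+x, …, Z_i ≤ t+x) − Σ_{j=1}^{n−i} (−1)^{j+1} C(n−i,j) P(Z_1 ≤ t+x, …, Z_{i+j} ≤ t+x) + Σ_{j=1}^{i} Σ_{m=1}^{n−i}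 (−1)^{j+m} C(i,j) C(n−i,m) P(Z_1 ≤ t, …, Z_j ≤ t, Z_{j+1} ≤ t+x, …, Z_{i+m} ≤ t+x) ] dx. -/
open MeasureTheory ProbabilityTheory

/-- The event `{Z_1 ≤ t, …, Z_j ≤ t, Z_{j+1} ≤ s, …, Z_i ≤ s}` (1-indexed components). -/
def cdfEvent {Ω : Type*} {n : ℕ} (Z : Fin n → Ω → ℝ) (j i : ℕ) (t s : ℝ) : Set Ω :=
  {ω | ∀ l : Fin n, ((l : ℕ) < j → Z l ω ≤ t) ∧ (j ≤ (l : ℕ) → (l : ℕ) < i → Z l ω ≤ s)}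

/-!
On `{Z_{1:n} > t}` the variable `Z_{n-k+1:n} - t` is positive, so by the layer-cake formula its
integral is `∫_0^∞ P(Z_{1:n} > t, Z_{n-k+1:n} > t + x) dx`. With `s = t + x`, this event says that
all `Z_l` exceed `t` and fewer than `n - k + 1` of them are `≤ s`: it is the disjoint union, over
the sets `T` of at most `n - k` indices, of the events that exactly the `Z_l` with `l ∈ T` lie in
`(t, s]` while the others exceed `s`. The indicator of such an event is
`∏_{l ∈ T} (1{Z_l ≤ s} - 1{Z_l ≤ t}) * ∏_{l ∉ T} (1 - 1{Z_l ≤ s})`; expanding the product gives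
an inclusion–exclusion sum of joint distribution functions, and exchangeability moves each of them
onto an initial segment of indices, so the probability only depends on `#T = i`. The term `i = 0`
gives the first integral of the formula, the terms `1 ≤ i ≤ n - k` the second.
-/

open Finset

theorem List.SortedLE.lt_getElem_iff_countP_le {α : Type*} [LinearOrder α] {l : List α}
    (hl : l.SortedLE) {i : ℕ} (hi : i < l.length) (s : α) :
    s < l[i] ↔ l.countP (· ≤ s) ≤ i := by
  have hmono := List.sortedLE_iff_getElem_le_getElem_of_le.1 hl
  constructor
  · intro h
    have hdrop : (l.drop i).countP (· ≤ s) = 0 := by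
      refine List.countP_eq_zero.2 fun a ha => ?_
      obtain ⟨j, hj, rfl⟩ := List.mem_drop_iff_getElem.1 ha
      simpa using h.trans_le (hmono (Nat.le_add_right i j))
    calc l.countP (· ≤ s) = (l.take i).countP (· ≤ s) + (l.drop i).countP (· ≤ s) := by
          rw [← List.countP_append, List.take_append_drop]
      _ ≤ i := by rw [hdrop]; exact List.countP_le_length.trans (by simp)
  · intro h
    by_contra! hle
    have htake : (l.take (i + 1)).countP (· ≤ s) = i + 1 := by
      rw [List.countP_eq_length.2 fun a ha => ?_]
      · simp only [List.length_take]; omega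
      obtain ⟨j, hj, rfl⟩ := List.mem_take_iff_getElem.1 ha
      simpa using (hmono (by omega : j ≤ i)).trans hle
    have := (List.take_sublist (i + 1) l).countP_le (p := (· ≤ s))
    omega

theorem Finset.sum_range_succ_eq_add_sum_Icc {M : Type*} [AddCommMonoid M] (f : ℕ → M) (a : ℕ) :
    ∑ i ∈ range (a + 1), f i = f 0 + ∑ i ∈ Icc 1 a, f i := by
  rw [range_eq_Ico, sum_eq_sum_Ico_succ_bot (by omega), zero_add, Ico_add_one_right_eq_Icc]

theorem Finset.sum_filter_card_lt_apply_card {α M : Type*} [Fintype α] [AddCommMonoid M]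
    (f : ℕ → M) (j : ℕ) :
    ∑ T ∈ ({T | #T < j} : Finset (Finset α)), f #T =
      ∑ i ∈ range j, (Fintype.card α).choose i • f i := by
  rw [← sum_fiberwise_of_maps_to (g := card) (t := range j)
    fun T hT => mem_range.2 (mem_filter.1 hT).2]
  refine sum_congr rfl fun i hi => ?_
  have hfiber : ({T ∈ ({T | #T < j} : Finset (Finset α)) | #T = i}) = powersetCard i univ := by
    ext T
    simp only [mem_filter, mem_univ, true_and, mem_powersetCard, subset_univ]
    exact ⟨And.right, fun h => ⟨h ▸ mem_range.1 hi, h⟩⟩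
  rw [hfiber, sum_congr rfl fun T hT => by rw [(mem_powersetCard.1 hT).2], sum_const,
    card_powersetCard, card_univ]

namespace Finset

variable {α : Type*} [DecidableEq α]

def memLabel (J K : Finset α) (a : α) : Fin 3 := if a ∈ J then 0 else if a ∈ K then 1 else 2

theorem memLabel_eq_zero_iff {J K : Finset α} {a : α} : memLabel J K a = 0 ↔ a ∈ J := by
  unfold memLabel; split_ifs <;> simp_all

theorem memLabel_eq_one_iff {J K : Finset α} (hJK : Disjoint J K) {a : α} :
    memLabel J K a = 1 ↔ a ∈ K := by
  have : a ∈ J → a ∉ K := fun h => disjoint_left.1 hJK h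
  unfold memLabel; split_ifs <;> simp_all

theorem memLabel_eq_two_iff {J K : Finset α} {a : α} : memLabel J K a = 2 ↔ a ∉ J ∪ K := by
  unfold memLabel; split_ifs <;> simp_all

variable [Fintype α] {J K J' K' : Finset α}

theorem card_filter_memLabel_eq (hJK : Disjoint J K) (hJK' : Disjoint J' K') (hJ : #J = #J')
    (hK : #K = #K') (c : Fin 3) : #{a | memLabel J K a = c} = #{a | memLabel J' K' a = c} := by
  fin_cases c
  · change #{a | memLabel J K a = 0} = #{a | memLabel J' K' a = 0}
    simpa only [memLabel_eq_zero_iff, filter_mem_eq_inter, univ_inter]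
  · change #{a | memLabel J K a = 1} = #{a | memLabel J' K' a = 1}
    simpa only [memLabel_eq_one_iff hJK, memLabel_eq_one_iff hJK', filter_mem_eq_inter, univ_inter]
  · change #{a | memLabel J K a = 2} = #{a | memLabel J' K' a = 2}
    simp only [memLabel_eq_two_iff, filter_not, filter_mem_eq_inter, univ_inter,
      ← compl_eq_univ_sdiff, card_compl, card_union_of_disjoint hJK, card_union_of_disjoint hJK',
      hJ, hK]

theorem exists_perm_mem_iff (hJK : Disjoint J K) (hJK' : Disjoint J' K') (hJ : #J = #J')
    (hK : #K = #K') : ∃ σ : Equiv.Perm α, ∀ a, (σ a ∈ J ↔ a ∈ J') ∧ (σ a ∈ K ↔ a ∈ K') := by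
  have e : ∀ c, {a // memLabel J' K' a = c} ≃ {a // memLabel J K a = c} := fun c =>
    Fintype.equivOfCardEq (by
      rw [Fintype.card_subtype, Fintype.card_subtype, card_filter_memLabel_eq hJK hJK' hJ hK])
  refine ⟨Equiv.ofFiberEquiv e, fun a => ?_⟩
  have h := Equiv.ofFiberEquiv_map e a
  rw [← memLabel_eq_zero_iff (K := K), h, memLabel_eq_zero_iff, ← memLabel_eq_one_iff hJK, h,
    memLabel_eq_one_iff hJK']
  exact ⟨Iff.rfl, Iff.rfl⟩

end Finset

theorem Set.setOf_lt_indicator_sub {α : Type*} {g : α → ℝ} {A : Set α} {t x : ℝ} (hx : 0 ≤ x) :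
    {a | x < A.indicator (fun a => g a - t) a} = A ∩ {a | t + x < g a} := by
  ext a
  by_cases ha : a ∈ A
  · simp [ha, lt_sub_iff_add_lt']
  · simp [ha, hx.not_gt]

namespace MeasureTheory

variable {α : Type*} [MeasurableSpace α] {μ : Measure α}

theorem Integrable.integrableOn_measureReal_lt {f : α → ℝ} (hf : Integrable f μ)
    (hf0 : 0 ≤ᵐ[μ] f) : IntegrableOn (fun x => μ.real {a | x < f a}) (Set.Ioi 0) := by
  have hfin : ∫⁻ x in Set.Ioi 0, μ {a | x < f a} ≠ ⊤ := by
    rw [← lintegral_eq_lintegral_meas_lt μ hf0 hf.aemeasurable]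
    exact hf.lintegral_lt_top.ne
  have hanti : Antitone fun x => μ {a | x < f a} :=
    fun _ _ h => measure_mono fun _ ha => h.trans_lt ha
  exact integrable_toReal_of_lintegral_ne_top hanti.measurable.aemeasurable hfin

theorem integral_add_of_nonneg {f g : α → ℝ} (hfg : Integrable (fun a => f a + g a) μ)
    (hf : AEStronglyMeasurable f μ) (hg : AEStronglyMeasurable g μ) (hf0 : 0 ≤ᵐ[μ] f)
    (hg0 : 0 ≤ᵐ[μ] g) : ∫ a, f a + g a ∂μ = ∫ a, f a ∂μ + ∫ a, g a ∂μ := by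
  refine integral_add (hfg.mono' hf ?_) (hfg.mono' hg ?_)
  · filter_upwards [hf0, hg0] with a (ha : 0 ≤ f a) (hb : 0 ≤ g a)
    rw [Real.norm_of_nonneg ha]; linarith
  · filter_upwards [hf0, hg0] with a (ha : 0 ≤ f a) (hb : 0 ≤ g a)
    rw [Real.norm_of_nonneg hb]; linarith

variable [IsFiniteMeasure μ] {g : α → ℝ} {A : Set α} {t : ℝ}

theorem Integrable.indicator_sub_const (hg : Integrable g μ) (hA : MeasurableSet A) :
    Integrable (A.indicator fun a => g a - t) μ :=
  (hg.sub (integrable_const t)).indicator hA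

theorem Integrable.integrableOn_measureReal_inter_lt (hg : Integrable g μ) (hA : MeasurableSet A)
    (hgt : ∀ a ∈ A, t < g a) :
    IntegrableOn (fun x => μ.real (A ∩ {a | t + x < g a})) (Set.Ioi 0) := by
  refine ((hg.indicator_sub_const hA).integrableOn_measureReal_lt ?_).congr_fun
    (fun x hx => congrArg μ.real (Set.setOf_lt_indicator_sub (le_of_lt hx))) measurableSet_Ioi
  exact ae_of_all _ (Set.indicator_nonneg fun a ha => sub_nonneg.2 (hgt a ha).le)

theorem Integrable.setIntegral_sub_eq_integral_measureReal (hg : Integrable g μ)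
    (hA : MeasurableSet A) (hgt : ∀ a ∈ A, t < g a) :
    ∫ a in A, (g a - t) ∂μ = ∫ x in Set.Ioi 0, μ.real (A ∩ {a | t + x < g a}) := by
  rw [← integral_indicator hA, (hg.indicator_sub_const hA).integral_eq_integral_meas_lt
    (ae_of_all _ (Set.indicator_nonneg fun a ha => sub_nonneg.2 (hgt a ha).le))]
  exact setIntegral_congr_fun measurableSet_Ioi fun x hx =>
    congrArg μ.real (Set.setOf_lt_indicator_sub (le_of_lt hx))

end MeasureTheory

namespace OrderStatistic

variable {Ω ι : Type*} {n : ℕ}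

theorem orderStat_lt_iff (Z : Fin n → Ω → ℝ) {j : ℕ} (hj : 1 ≤ j) (hjn : j ≤ n) (ω : Ω)
    (s : ℝ) : s < orderStat Z j ω ↔ #{l | Z l ω ≤ s} < j := by
  unfold orderStat
  rw [List.getD_eq_getElem _ _ (by simp only [List.length_mergeSort, List.length_ofFn]; omega),
    List.sortedLE_mergeSort.lt_getElem_iff_countP_le, (List.mergeSort_perm _ _).countP_eq,
    List.countP_ofFn]
  omega

theorem lt_orderStat_one_iff (Z : Fin n → Ω → ℝ) (hn : 1 ≤ n) (ω : Ω) (t : ℝ) :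
    t < orderStat Z 1 ω ↔ ∀ l, t < Z l ω := by
  rw [orderStat_lt_iff Z le_rfl hn, Nat.lt_one_iff, card_eq_zero, filter_eq_empty_iff]
  simp only [mem_univ, true_implies, not_le]

theorem orderStat_mono (Z : Fin n → Ω → ℝ) {i j : ℕ} (hi : 1 ≤ i) (hij : i ≤ j) (hjn : j ≤ n)
    (ω : Ω) : orderStat Z i ω ≤ orderStat Z j ω :=
  le_of_forall_lt fun c hc => (orderStat_lt_iff Z (hi.trans hij) hjn ω c).2
    (((orderStat_lt_iff Z hi (hij.trans hjn) ω c).1 hc).trans_le hij)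

theorem exists_eq_orderStat (Z : Fin n → Ω → ℝ) {j : ℕ} (hj : 1 ≤ j) (hjn : j ≤ n) (ω : Ω) :
    ∃ l, Z l ω = orderStat Z j ω := by
  unfold orderStat
  rw [List.getD_eq_getElem _ _ (by simp only [List.length_mergeSort, List.length_ofFn]; omega)]
  exact List.mem_ofFn.1 (List.mem_mergeSort.1 (List.getElem_mem _))

def cdfEventOn (Z : ι → Ω → ℝ) (J K : Finset ι) (t s : ℝ) : Set Ω :=
  {ω | (∀ l ∈ J, Z l ω ≤ t) ∧ ∀ l ∈ K, Z l ω ≤ s}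

theorem cdfEvent_eq_cdfEventOn (Z : Fin n → Ω → ℝ) (j i : ℕ) (t s : ℝ) :
    cdfEvent Z j i t s = cdfEventOn Z {l | l < j} {l | j ≤ (l : ℕ) ∧ l < i} t s := by
  ext ω
  simp only [cdfEvent, cdfEventOn, Set.mem_ofPred_eq, mem_filter, mem_univ, true_and]
  exact ⟨fun h => ⟨fun l hl => (h l).1 hl, fun l hl => (h l).2 hl.1 hl.2⟩,
    fun h l => ⟨h.1 l, fun h₁ h₂ => h.2 l ⟨h₁, h₂⟩⟩⟩

theorem cdfEvent_zero_zero (Z : Fin n → Ω → ℝ) (t s : ℝ) : cdfEvent Z 0 0 t s = Set.univ := by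
  ext ω; simp [cdfEvent]

theorem indicator_cdfEventOn (Z : ι → Ω → ℝ) (J K : Finset ι) (t s : ℝ) (ω : Ω) :
    (cdfEventOn Z J K t s).indicator 1 ω =
      (∏ l ∈ J, if Z l ω ≤ t then (1 : ℝ) else 0) * ∏ l ∈ K, if Z l ω ≤ s then (1 : ℝ) else 0 := by
  simp only [Set.indicator_apply, cdfEventOn, Set.mem_ofPred_eq, prod_boole,
    ite_zero_mul_ite_zero, Pi.one_apply, mul_one]

def bandEvent (Z : ι → Ω → ℝ) (T : Finset ι) (t s : ℝ) : Set Ω :=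
  {ω | ∀ l, t < Z l ω ∧ (Z l ω ≤ s ↔ l ∈ T)}

theorem indicator_bandEvent [Fintype ι] [DecidableEq ι] (Z : ι → Ω → ℝ) (T : Finset ι)
    {t s : ℝ} (hts : t ≤ s) (ω : Ω) :
    (bandEvent Z T t s).indicator 1 ω = ∑ J ∈ T.powerset, ∑ M ∈ Tᶜ.powerset,
      (-1 : ℝ) ^ (#J + #M) * (cdfEventOn Z J (T \ J ∪ M) t s).indicator 1 ω := by
  set χ : ℝ → ι → ℝ := fun c l => if Z l ω ≤ c then 1 else 0
  have hprod : (bandEvent Z T t s).indicator 1 ω =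
      (∏ l ∈ T, (χ s l - χ t l)) * ∏ l ∈ Tᶜ, (1 - χ s l) := by
    calc (bandEvent Z T t s).indicator 1 ω
        = ∏ l, if t < Z l ω ∧ (Z l ω ≤ s ↔ l ∈ T) then (1 : ℝ) else 0 := by
          simp [Set.indicator_apply, bandEvent, prod_boole]
      _ = _ := (prod_mul_prod_compl T _).symm
      _ = _ := by
          congr 1 <;> refine prod_congr rfl fun l hl => ?_
          · simp only [χ, show l ∈ T from hl, iff_true]
            split_ifs <;> grind
          · simp only [χ, mem_compl.1 hl, iff_false]
            split_ifs <;> grind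
  rw [hprod, prod_sub, prod_sub, sum_mul_sum]
  refine sum_congr rfl fun J hJ => sum_congr rfl fun M hM => ?_
  rw [indicator_cdfEventOn, prod_union, pow_add]
  · simp only [prod_const_one, mul_one]; ring
  · exact disjoint_left.2 fun a ha haM => mem_compl.1 (mem_powerset.1 hM haM) (mem_sdiff.1 ha).1

variable [MeasurableSpace Ω]

def Exchangeable (P : Measure Ω) (Z : ι → Ω → ℝ) : Prop :=
  ∀ σ : Equiv.Perm ι,
    Measure.map (fun ω => fun i => Z (σ i) ω) P = Measure.map (fun ω => fun i => Z i ω) P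

theorem measurableSet_cdfEventOn {Z : ι → Ω → ℝ} (hZm : ∀ i, Measurable (Z i))
    (J K : Finset ι) (t s : ℝ) : MeasurableSet (cdfEventOn Z J K t s) := by
  simp only [cdfEventOn, Set.ofPred_and, Set.ofPred_forall]
  exact (MeasurableSet.biInter J.countable_toSet fun l _ =>
      measurableSet_le (hZm l) measurable_const).inter
    (.biInter K.countable_toSet fun l _ => measurableSet_le (hZm l) measurable_const)

theorem measurableSet_bandEvent [Countable ι] {Z : ι → Ω → ℝ} (hZm : ∀ i, Measurable (Z i))
    (T : Finset ι) (t s : ℝ) : MeasurableSet (bandEvent Z T t s) := by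
  simp only [bandEvent, Set.ofPred_forall]
  exact MeasurableSet.iInter fun l => (measurableSet_lt measurable_const (hZm l)).inter
    ((measurableSet_le (hZm l) measurable_const).iff (MeasurableSet.const _))

theorem Exchangeable.measure_cdfEventOn_congr [Fintype ι] [DecidableEq ι] {P : Measure Ω}
    {Z : ι → Ω → ℝ} (hexch : Exchangeable P Z) (hZm : ∀ i, Measurable (Z i))
    {J K J' K' : Finset ι} (hJK : Disjoint J K) (hJK' : Disjoint J' K') (hJ : #J = #J')
    (hK : #K = #K') (t s : ℝ) :
    P (cdfEventOn Z J K t s) = P (cdfEventOn Z J' K' t s) := by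
  obtain ⟨σ, hσ⟩ := exists_perm_mem_iff hJK hJK' hJ hK
  let B : Set (ι → ℝ) := {v | (∀ l ∈ J', v l ≤ t) ∧ ∀ l ∈ K', v l ≤ s}
  have hB : MeasurableSet B := measurableSet_cdfEventOn (fun l => measurable_pi_apply l) J' K' t s
  have hσB : (fun ω i => Z (σ i) ω) ⁻¹' B = cdfEventOn Z J K t s := by
    ext ω
    simp only [Set.mem_preimage, B, cdfEventOn, Set.mem_ofPred_eq, ← (hσ _).1, ← (hσ _).2]
    exact and_congr (σ.forall_congr_left.trans (by simp)) (σ.forall_congr_left.trans (by simp))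
  rw [← hσB, ← Measure.map_apply (by fun_prop) hB, hexch σ, Measure.map_apply (by fun_prop) hB]
  rfl

variable {P : Measure Ω} {Z : Fin n → Ω → ℝ}

theorem measurable_card_filter_le (hZm : ∀ i, Measurable (Z i)) (s : ℝ) :
    Measurable fun ω => #{l | Z l ω ≤ s} := by
  simp_rw [card_filter]
  exact Finset.measurable_sum _ fun l _ =>
    Measurable.ite (measurableSet_le (hZm l) measurable_const) measurable_const measurable_const

theorem measurable_orderStat (hZm : ∀ i, Measurable (Z i)) {j : ℕ} (hj : 1 ≤ j) (hjn : j ≤ n) :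
    Measurable (orderStat Z j) := by
  refine measurable_of_Ioi fun s => ?_
  have : orderStat Z j ⁻¹' Set.Ioi s = (fun ω => #{l | Z l ω ≤ s}) ⁻¹' Set.Iio j :=
    Set.ext fun ω => orderStat_lt_iff Z hj hjn ω s
  rw [this]
  exact measurable_card_filter_le hZm s measurableSet_Iio

theorem integrable_orderStat (hZm : ∀ i, Measurable (Z i)) (hZint : ∀ i, Integrable (Z i) P)
    {j : ℕ} (hj : 1 ≤ j) (hjn : j ≤ n) : Integrable (orderStat Z j) P := by
  refine (integrable_finsetSum univ fun l _ => (hZint l).abs).mono'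
    (measurable_orderStat hZm hj hjn).aestronglyMeasurable (ae_of_all _ fun ω => ?_)
  obtain ⟨l, hl⟩ := exists_eq_orderStat Z hj hjn ω
  rw [← hl, Real.norm_eq_abs]
  exact single_le_sum (f := fun l => |Z l ω|) (fun _ _ => abs_nonneg _) (mem_univ l)

theorem Exchangeable.measure_cdfEventOn (hexch : Exchangeable P Z) (hZm : ∀ i, Measurable (Z i))
    {J K : Finset (Fin n)} (hJK : Disjoint J K) (t s : ℝ) :
    P (cdfEventOn Z J K t s) = P (cdfEvent Z #J (#J + #K) t s) := by
  have hn : #J + #K ≤ n := by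
    simpa [← card_union_of_disjoint hJK] using card_le_univ (J ∪ K)
  have hK₀ : ({l | #J ≤ (l : ℕ) ∧ l < #J + #K} : Finset (Fin n)) =
      ({l | l < #J + #K} : Finset (Fin n)) \ ({l | l < #J} : Finset (Fin n)) := by
    ext l; simp only [mem_filter, mem_sdiff, mem_univ, true_and]; omega
  rw [cdfEvent_eq_cdfEventOn]
  refine hexch.measure_cdfEventOn_congr hZm hJK ?_ ?_ ?_ t s
  · rw [hK₀]; exact disjoint_sdiff
  · rw [Fin.card_filter_val_lt]; omega
  · rw [hK₀, card_sdiff_of_subset fun l hl => by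
      simp only [mem_filter, mem_univ, true_and] at hl ⊢; omega,
      Fin.card_filter_val_lt, Fin.card_filter_val_lt]
    omega

-- The inclusion–exclusion value of `P.real (bandEvent Z T t s)` for `#T = i`.
noncomputable def bandProb (P : Measure Ω) (Z : Fin n → Ω → ℝ) (i : ℕ) (t s : ℝ) : ℝ :=
  ∑ j ∈ range (i + 1), ∑ m ∈ range (n - i + 1),
    (-1 : ℝ) ^ (j + m) * i.choose j * (n - i).choose m * P.real (cdfEvent Z j (i + m) t s)

section

variable (P Z)

theorem bandProb_eq (i : ℕ) (t s : ℝ) :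
    bandProb P Z i t s = P.real (cdfEvent Z 0 i t s)
      - ∑ j ∈ Icc 1 i, (-1 : ℝ) ^ (j + 1) * i.choose j * P.real (cdfEvent Z j i t s)
      - ∑ j ∈ Icc 1 (n - i), (-1 : ℝ) ^ (j + 1) * (n - i).choose j *
          P.real (cdfEvent Z 0 (i + j) t s)
      + ∑ j ∈ Icc 1 i, ∑ m ∈ Icc 1 (n - i), (-1 : ℝ) ^ (j + m) * i.choose j *
          (n - i).choose m * P.real (cdfEvent Z j (i + m) t s) := by
  simp only [bandProb, sum_range_succ_eq_add_sum_Icc, sum_add_distrib, add_zero, zero_add,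
    Nat.choose_zero_right, Nat.cast_one, mul_one, pow_zero, one_mul]
  have hneg : ∀ (a : ℕ) (c d : ℕ → ℝ),
      ∑ j ∈ Icc 1 a, (-1 : ℝ) ^ j * c j * d j = -∑ j ∈ Icc 1 a, (-1 : ℝ) ^ (j + 1) * c j * d j :=
    fun a c d => by rw [← sum_neg_distrib]; exact sum_congr rfl fun j _ => by ring
  rw [hneg, hneg]
  ring

theorem bandProb_zero [IsProbabilityMeasure P] (t s : ℝ) :
    bandProb P Z 0 t s =
      1 - ∑ j ∈ Icc 1 n, (-1 : ℝ) ^ (j - 1) * n.choose j * P.real (cdfEvent Z 0 j t s) := by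
  rw [bandProb_eq, cdfEvent_zero_zero, probReal_univ, Nat.sub_zero]
  simp only [Nat.zero_add, Icc_eq_empty_of_lt one_pos, sum_empty, sub_zero, add_zero]
  refine congrArg _ (sum_congr rfl fun j hj => ?_)
  obtain ⟨j, rfl⟩ := Nat.exists_eq_add_of_le' (mem_Icc.1 hj).1
  rw [Nat.add_sub_cancel, pow_succ, pow_succ]
  ring

theorem monotone_measureReal_cdfEvent [IsFiniteMeasure P] (j i : ℕ) (t : ℝ) :
    Monotone fun s => P.real (cdfEvent Z j i t s) :=
  fun _ _ hs => measureReal_mono fun ω hω l => ⟨(hω l).1, fun h₁ h₂ => ((hω l).2 h₁ h₂).trans hs⟩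

theorem measurable_bandProb [IsFiniteMeasure P] (i : ℕ) (t : ℝ) :
    Measurable fun s => bandProb P Z i t s := by
  unfold bandProb
  exact Finset.measurable_sum _ fun j _ => Finset.measurable_sum _ fun m _ =>
    (monotone_measureReal_cdfEvent P Z j (i + m) t).measurable.const_mul _

end

theorem Exchangeable.measureReal_bandEvent [IsFiniteMeasure P] (hexch : Exchangeable P Z)
    (hZm : ∀ i, Measurable (Z i)) (T : Finset (Fin n)) {t s : ℝ} (hts : t ≤ s) :
    P.real (bandEvent Z T t s) = bandProb P Z #T t s := by
  have hint : ∀ J K, Integrable ((cdfEventOn Z J K t s).indicator (1 : Ω → ℝ)) P := fun J K =>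
    (integrable_const (1 : ℝ)).indicator (measurableSet_cdfEventOn hZm J K t s)
  calc P.real (bandEvent Z T t s) = ∫ ω, (bandEvent Z T t s).indicator 1 ω ∂P :=
        (integral_indicator_one (measurableSet_bandEvent hZm T t s)).symm
    _ = ∑ J ∈ T.powerset, ∑ M ∈ Tᶜ.powerset,
          (-1 : ℝ) ^ (#J + #M) * P.real (cdfEventOn Z J (T \ J ∪ M) t s) := by
        simp_rw [indicator_bandEvent Z T hts]
        rw [integral_finsetSum _ fun J _ => integrable_finsetSum _ fun M _ =>
          (hint _ _).const_mul _]
        refine sum_congr rfl fun J _ => ?_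
        rw [integral_finsetSum _ fun M _ => (hint _ _).const_mul _]
        refine sum_congr rfl fun M _ => ?_
        rw [integral_const_mul, integral_indicator_one (measurableSet_cdfEventOn hZm _ _ t s)]
    _ = ∑ J ∈ T.powerset, ∑ M ∈ Tᶜ.powerset,
          (-1 : ℝ) ^ (#J + #M) * P.real (cdfEvent Z #J (#T + #M) t s) := by
        refine sum_congr rfl fun J hJ => sum_congr rfl fun M hM => ?_
        rw [mem_powerset] at hJ hM
        have hM' : Disjoint T M := disjoint_right.2 fun a ha => mem_compl.1 (hM ha)
        have hdisj : Disjoint J (T \ J ∪ M) :=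
          disjoint_union_right.2 ⟨disjoint_sdiff, hM'.mono_left hJ⟩
        rw [measureReal_def, hexch.measure_cdfEventOn hZm hdisj,
          card_union_of_disjoint (hM'.mono_left sdiff_subset), card_sdiff_of_subset hJ,
          ← add_assoc, Nat.add_sub_cancel' (card_le_card hJ), measureReal_def]
    _ = bandProb P Z #T t s := by
        rw [sum_congr rfl fun J _ => sum_powerset_apply_card
            (fun m => (-1 : ℝ) ^ (#J + m) * P.real (cdfEvent Z #J (#T + m) t s)),
          sum_powerset_apply_card (fun j => ∑ m ∈ range (#Tᶜ + 1),
            (#Tᶜ).choose m • ((-1 : ℝ) ^ (j + m) * P.real (cdfEvent Z j (#T + m) t s))),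
          card_compl, Fintype.card_fin, bandProb]
        refine sum_congr rfl fun j _ => ?_
        rw [nsmul_eq_mul, mul_sum]
        refine sum_congr rfl fun m _ => ?_
        rw [nsmul_eq_mul]; ring

theorem Exchangeable.bandProb_nonneg [IsFiniteMeasure P] (hexch : Exchangeable P Z)
    (hZm : ∀ i, Measurable (Z i)) {i : ℕ} (hi : i ≤ n) {t s : ℝ} (hts : t ≤ s) :
    0 ≤ bandProb P Z i t s := by
  obtain ⟨T, -, rfl⟩ := exists_subset_card_eq (show i ≤ #(univ : Finset (Fin n)) by simpa)
  rw [← hexch.measureReal_bandEvent hZm T hts]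
  exact measureReal_nonneg

theorem Exchangeable.measureReal_forall_lt_and_card_lt [IsFiniteMeasure P]
    (hexch : Exchangeable P Z) (hZm : ∀ i, Measurable (Z i)) (j : ℕ) {t s : ℝ} (hts : t ≤ s) :
    P.real {ω | (∀ l, t < Z l ω) ∧ #{l | Z l ω ≤ s} < j} =
      ∑ i ∈ range j, n.choose i * bandProb P Z i t s := by
  have hunion : {ω | (∀ l, t < Z l ω) ∧ #{l | Z l ω ≤ s} < j} =
      ⋃ T ∈ ({T | #T < j} : Finset (Finset (Fin n))), bandEvent Z T t s := by
    ext ω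
    simp only [Set.mem_ofPred_eq, Set.mem_iUnion, mem_filter, mem_univ, true_and, exists_prop,
      bandEvent]
    constructor
    · rintro ⟨hlt, hcard⟩
      exact ⟨_, hcard, fun l => ⟨hlt l, by simp⟩⟩
    · rintro ⟨T, hT, hω⟩
      have : ({l | Z l ω ≤ s} : Finset (Fin n)) = T := by ext l; simpa using (hω l).2
      exact ⟨fun l => (hω l).1, this ▸ hT⟩
  have hdisj : (({T | #T < j} : Finset (Finset (Fin n))) : Set (Finset (Fin n))).PairwiseDisjoint
      fun T => bandEvent Z T t s := by
    intro T₁ _ T₂ _ hne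
    refine Set.disjoint_left.2 fun ω h₁ h₂ => hne (Finset.ext fun l => ?_)
    rw [← (h₁ l).2, (h₂ l).2]
  rw [hunion, measureReal_biUnion_finset hdisj fun T _ => measurableSet_bandEvent hZm T t s,
    sum_congr rfl fun T _ => hexch.measureReal_bandEvent hZm T hts,
    Finset.sum_filter_card_lt_apply_card (fun i => bandProb P Z i t s), Fintype.card_fin]
  simp only [nsmul_eq_mul]

theorem Exchangeable.measureReal_lt_orderStat_one_inter [IsFiniteMeasure P]
    (hexch : Exchangeable P Z) (hZm : ∀ i, Measurable (Z i)) {j : ℕ} (hj : 1 ≤ j) (hjn : j ≤ n)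
    {t s : ℝ} (hts : t ≤ s) :
    P.real ({ω | t < orderStat Z 1 ω} ∩ {ω | s < orderStat Z j ω}) =
      ∑ i ∈ range j, n.choose i * bandProb P Z i t s := by
  rw [← hexch.measureReal_forall_lt_and_card_lt hZm j hts]
  congr 1
  ext ω
  rw [Set.mem_inter_iff, Set.mem_ofPred_eq, Set.mem_ofPred_eq, Set.mem_ofPred_eq,
    lt_orderStat_one_iff Z (hj.trans hjn), orderStat_lt_iff Z hj hjn]

theorem Exchangeable.setIntegral_orderStat_sub [IsFiniteMeasure P] (hexch : Exchangeable P Z)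
    (hZm : ∀ i, Measurable (Z i)) (hZint : ∀ i, Integrable (Z i) P) {j : ℕ} (hjn : j < n)
    (t : ℝ) :
    ∫ ω in {ω | t < orderStat Z 1 ω}, (orderStat Z (j + 1) ω - t) ∂P =
      (∫ x in Set.Ioi 0, bandProb P Z 0 t (t + x)) +
        ∫ x in Set.Ioi 0, ∑ i ∈ Icc 1 j, n.choose i * bandProb P Z i t (t + x) := by
  have hAm : MeasurableSet {ω | t < orderStat Z 1 ω} :=
    measurableSet_lt measurable_const (measurable_orderStat hZm le_rfl (by omega))
  have hgt : ∀ ω ∈ {ω | t < orderStat Z 1 ω}, t < orderStat Z (j + 1) ω :=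
    fun ω hω => hω.trans_le (orderStat_mono Z le_rfl (by omega) hjn ω)
  have hg := integrable_orderStat hZm hZint (by omega : 1 ≤ j + 1) hjn
  have hband : ∀ i ≤ n, ∀ x ∈ Set.Ioi (0 : ℝ), 0 ≤ bandProb P Z i t (t + x) :=
    fun i hi x hx => hexch.bandProb_nonneg hZm hi (by linarith [hx.out])
  have hmeas : ∀ i, Measurable fun x => bandProb P Z i t (t + x) :=
    fun i => (measurable_bandProb P Z i t).comp (measurable_const_add t)
  have htail : ∀ x ∈ Set.Ioi (0 : ℝ),
      P.real ({ω | t < orderStat Z 1 ω} ∩ {ω | t + x < orderStat Z (j + 1) ω}) =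
        bandProb P Z 0 t (t + x) + ∑ i ∈ Icc 1 j, n.choose i * bandProb P Z i t (t + x) :=
    fun x hx => by
      rw [hexch.measureReal_lt_orderStat_one_inter hZm (by omega) hjn (by linarith [hx.out]),
        sum_range_succ_eq_add_sum_Icc, Nat.choose_zero_right, Nat.cast_one, one_mul]
  rw [hg.setIntegral_sub_eq_integral_measureReal hAm hgt,
    setIntegral_congr_fun measurableSet_Ioi htail]
  exact integral_add_of_nonneg
    ((hg.integrableOn_measureReal_inter_lt hAm hgt).congr_fun htail measurableSet_Ioi)
    (hmeas 0).aestronglyMeasurable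
    (Finset.measurable_sum _ fun i _ => (hmeas i).const_mul _).aestronglyMeasurable
    (ae_restrict_of_forall_mem measurableSet_Ioi (hband 0 n.zero_le))
    (ae_restrict_of_forall_mem measurableSet_Ioi fun x hx => sum_nonneg fun i hi =>
      mul_nonneg (Nat.cast_nonneg _) (hband i ((mem_Icc.1 hi).2.trans hjn.le) x hx))

end OrderStatistic

open OrderStatistic

theorem mrl_order_statistic_given_min_exchangeable_general
    {Ω : Type*} [MeasurableSpace Ω] (P : Measure Ω) [IsProbabilityMeasure P]
    (n k : ℕ) (hn : 1 ≤ n) (hk1 : 1 ≤ k)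
    (Z : Fin n → Ω → ℝ) (hZm : ∀ i, Measurable (Z i))
    (hZint : ∀ i, Integrable (Z i) P)
    (hexch : ∀ σ : Equiv.Perm (Fin n),
      Measure.map (fun ω => fun i => Z (σ i) ω) P = Measure.map (fun ω => fun i => Z i ω) P)
    (t : ℝ) :
    (∫ ω in {ω | t < orderStat Z 1 ω}, (orderStat Z (n - k + 1) ω - t) ∂P)
        / (P {ω | t < orderStat Z 1 ω}).toReal
      = (1 / (P {ω | t < orderStat Z 1 ω}).toReal) *
          (∫ x in Set.Ioi (0 : ℝ),
            (1 - ∑ j ∈ Finset.Icc 1 n, (-1 : ℝ) ^ (j - 1) * (n.choose j) *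
              (P (cdfEvent Z 0 j t (t + x))).toReal))
        + (1 / (P {ω | t < orderStat Z 1 ω}).toReal) *
          (∫ x in Set.Ioi (0 : ℝ),
            ∑ i ∈ Finset.Icc 1 (n - k), (n.choose i : ℝ) *
              ((P (cdfEvent Z 0 i t (t + x))).toReal
                - (∑ j ∈ Finset.Icc 1 i, (-1 : ℝ) ^ (j + 1) * (i.choose j) *
                    (P (cdfEvent Z j i t (t + x))).toReal)
                - (∑ j ∈ Finset.Icc 1 (n - i), (-1 : ℝ) ^ (j + 1) * ((n - i).choose j) *
                    (P (cdfEvent Z 0 (i + j) t (t + x))).toReal)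
                + ∑ j ∈ Finset.Icc 1 i, ∑ m ∈ Finset.Icc 1 (n - i),
                    (-1 : ℝ) ^ (j + m) * (i.choose j) * ((n - i).choose m) *
                      (P (cdfEvent Z j (i + m) t (t + x))).toReal)) := by
  rw [Exchangeable.setIntegral_orderStat_sub hexch hZm hZint (by omega : n - k < n) t]
  simp_rw [bandProb_zero, bandProb_eq, measureReal_def]
  ring

theorem mrl_order_statistic_given_min_exchangeable
    {Ω : Type*} [MeasurableSpace Ω] (P : Measure Ω) [IsProbabilityMeasure P]
    (n k : ℕ) (hn : 1 ≤ n) (hk1 : 1 ≤ k) (hkn : k ≤ n)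
    (Z : Fin n → Ω → ℝ) (hZm : ∀ i, Measurable (Z i))
    (hZint : ∀ i, Integrable (Z i) P)
    (hexch : ∀ σ : Equiv.Perm (Fin n),
      Measure.map (fun ω => fun i => Z (σ i) ω) P = Measure.map (fun ω => fun i => Z i ω) P)
    (t : ℝ) (ht : 0 ≤ t)
    (hpos : 0 < (P {ω | t < orderStat Z 1 ω}).toReal) :
    (∫ ω in {ω | t < orderStat Z 1 ω}, (orderStat Z (n - k + 1) ω - t) ∂P)
        / (P {ω | t < orderStat Z 1 ω}).toReal
      = (1 / (P {ω | t < orderStat Z 1 ω}).toReal) *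
          (∫ x in Set.Ioi (0 : ℝ),
            (1 - ∑ j ∈ Finset.Icc 1 n, (-1 : ℝ) ^ (j - 1) * (n.choose j) *
              (P (cdfEvent Z 0 j t (t + x))).toReal))
        + (1 / (P {ω | t < orderStat Z 1 ω}).toReal) *
          (∫ x in Set.Ioi (0 : ℝ),
            ∑ i ∈ Finset.Icc 1 (n - k), (n.choose i : ℝ) *
              ((P (cdfEvent Z 0 i t (t + x))).toReal
                - (∑ j ∈ Finset.Icc 1 i, (-1 : ℝ) ^ (j + 1) * (i.choose j) *
                    (P (cdfEvent Z j i t (t + x))).toReal)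
                - (∑ j ∈ Finset.Icc 1 (n - i), (-1 : ℝ) ^ (j + 1) * ((n - i).choose j) *
                    (P (cdfEvent Z 0 (i + j) t (t + x))).toReal)
                + ∑ j ∈ Finset.Icc 1 i, ∑ m ∈ Finset.Icc 1 (n - i),
                    (-1 : ℝ) ^ (j + m) * (i.choose j) * ((n - i).choose m) *
                      (P (cdfEvent Z j (i + m) t (t + x))).toReal)) :=
  mrl_order_statistic_given_min_exchangeable_general P n k hn hk1 Z hZm hZint hexch t
end

section
/- Let n ≥ 1, 1 ≤ k ≤ n, and let Z_1,…,Z_n be independent identically distributed integrable nonnegative random variables with cumulative distribution function F, and write F̄ = 1 − F. Let t ≥ 0 with F̄(t) > 0. Then E(Z_{n-k+1:n} − t | Z_{1:n} > t) = Σ_{m=0}^{n−k} Σ_{i=0}^{m} C(n,m) C(m,i) (−1)^i (∫_t^∞ F̄(z)^{n−m+i} dz) / F̄(t)^{n−m+i}. -/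
/-!
On `{Z_{1:n} > t}` the variable `Z_{n-k+1:n} - t` is nonnegative, so by the layer-cake formula
its integral is `∫_t^∞ P(Z_{1:n} > t, Z_{n-k+1:n} > z) dz`. For `z > t` the event says that all
`Z_i` exceed `t` and at most `n - k` of them lie in `(t, z]`; by independence it has probability
`∑_{m ≤ n-k} C(n,m) (F z - F t)^m F̄(z)^(n-m)`. Writing `F z - F t = F̄ t - F̄ z`, expanding
binomially and dividing by `P(Z_{1:n} > t) = F̄(t)^n` gives the formula.
-/

open MeasureTheory ProbabilityTheory

open Finset

lemma List.countP_ofFn_eq_card {α : Type*} {m : ℕ} (f : Fin m → α) (p : α → Prop)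
    [DecidablePred p] : (List.ofFn f).countP (fun a => decide (p a)) = #{i | p (f i)} := by
  rw [← Multiset.coe_countP, ← Fin.univ_val_map, Multiset.countP_map]
  rfl

lemma Monotone.lt_apply_iff_card_le {α : Type*} [LinearOrder α] {m : ℕ} {f : Fin m → α}
    (hf : Monotone f) (j : Fin m) (z : α) : z < f j ↔ #{i | f i ≤ z} ≤ j := by
  constructor
  · intro hz
    calc #{i | f i ≤ z} ≤ #(Iio j) := card_le_card fun i hi => by
          simp only [mem_filter, mem_univ, true_and] at hi
          exact mem_Iio.2 (lt_of_not_ge fun hji => (hz.trans_le (hf hji)).not_ge hi)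
      _ = j := Fin.card_Iio j
  · intro hcard
    by_contra! hz
    have hsub : Iic j ⊆ ({i | f i ≤ z} : Finset (Fin m)) := fun i hi =>
      mem_filter.2 ⟨mem_univ i, (hf (mem_Iic.1 hi)).trans hz⟩
    have := card_le_card hsub
    rw [Fin.card_Iic] at this
    omega

lemma List.SortedLE.lt_getElem_iff_card_le {α : Type*} [LinearOrder α] {l : List α}
    (hl : l.SortedLE) {m : ℕ} {f : Fin m → α} (hperm : l.Perm (List.ofFn f)) {j : ℕ}
    (hj : j < l.length) (z : α) : z < l[j] ↔ #{i | f i ≤ z} ≤ j := by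
  have hcount : #{i | f i ≤ z} = #{i | l.get i ≤ z} := by
    rw [← List.countP_ofFn_eq_card f (· ≤ z), ← List.countP_ofFn_eq_card l.get (· ≤ z),
      List.ofFn_get, hperm.countP_eq]
  rw [hcount]
  exact hl.monotone_get.lt_apply_iff_card_le ⟨j, hj⟩ z

lemma Finset.sum_filter_card_lt {α M : Type*} [Fintype α] [AddCommMonoid M] (f : ℕ → M)
    (j : ℕ) :
    ∑ S : Finset α with #S < j, f #S = ∑ m ∈ range j, (Fintype.card α).choose m • f m := by
  rw [← sum_fiberwise_of_maps_to (g := card) (t := range j) (by simp)]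
  refine sum_congr rfl fun m hm => ?_
  rw [← card_univ, ← sum_powersetCard, powersetCard_eq_filter, powerset_univ, filter_filter]
  refine sum_congr (filter_congr fun S _ => ?_) fun _ _ => rfl
  rw [mem_range] at hm
  constructor
  · exact fun h => h.2
  · rintro rfl
    exact ⟨hm, rfl⟩

lemma sub_pow_mul_pow_eq_sum {R : Type*} [CommRing R] (a b : R) (m n : ℕ) :
    (a - b) ^ m * b ^ (n - m)
      = ∑ i ∈ range (m + 1), (m.choose i : R) * (-1) ^ i * a ^ (m - i) * b ^ (n - m + i) := by
  rw [sub_eq_neg_add, add_pow, sum_mul]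
  refine sum_congr rfl fun i _ => ?_
  rw [neg_pow, pow_add]
  ring

lemma forall_mem_ite_Ioc_Ioi_iff {ι α : Type*} [Fintype ι] [DecidableEq ι] [LinearOrder α]
    {x : ι → α} {t z : α} (htz : t ≤ z) (S : Finset ι) :
    (∀ i, x i ∈ if i ∈ S then Set.Ioc t z else Set.Ioi z)
      ↔ (∀ i, t < x i) ∧ ({i | x i ≤ z} : Finset ι) = S := by
  simp only [Finset.ext_iff, mem_filter, mem_univ, true_and]
  constructor
  · intro h
    refine ⟨fun i => ?_, fun i => ?_⟩ <;> have hi := h i <;> split_ifs at hi <;> grind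
  · rintro ⟨ht, hS⟩ i
    split_ifs <;> grind

section OrderStat

variable {Ω : Type*} {n : ℕ}

lemma lt_orderStat_iff (Z : Fin n → Ω → ℝ) {j : ℕ} (hj1 : 1 ≤ j) (hjn : j ≤ n) (z : ℝ)
    (ω : Ω) : z < orderStat Z j ω ↔ #{i | Z i ω ≤ z} < j := by
  have hlen := List.length_mergeSort (List.ofFn fun i => Z i ω) (le := fun x y => x ≤ y)
  rw [List.length_ofFn] at hlen
  rw [orderStat, List.getD_eq_getElem _ _ (by omega),
    List.sortedLE_mergeSort.lt_getElem_iff_card_le (List.mergeSort_perm _ _)]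
  omega

lemma lt_orderStat_one_iff (Z : Fin n → Ω → ℝ) (hn : 1 ≤ n) (t : ℝ) (ω : Ω) :
    t < orderStat Z 1 ω ↔ ∀ i, t < Z i ω := by
  simp [lt_orderStat_iff Z le_rfl hn]

lemma orderStat_one_le (Z : Fin n → Ω → ℝ) {j : ℕ} (hj1 : 1 ≤ j) (hjn : j ≤ n) (ω : Ω) :
    orderStat Z 1 ω ≤ orderStat Z j ω :=
  le_of_forall_lt fun z hz => by
    rw [lt_orderStat_iff Z le_rfl (hj1.trans hjn)] at hz
    rw [lt_orderStat_iff Z hj1 hjn]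
    omega

lemma exists_orderStat_eq (Z : Fin n → Ω → ℝ) {j : ℕ} (hj1 : 1 ≤ j) (hjn : j ≤ n) (ω : Ω) :
    ∃ i, Z i ω = orderStat Z j ω := by
  have hlen := List.length_mergeSort (List.ofFn fun i => Z i ω) (le := fun x y => x ≤ y)
  rw [List.length_ofFn] at hlen
  rw [orderStat, List.getD_eq_getElem _ _ (by omega), ← List.mem_ofFn,
    ← (List.mergeSort_perm _ _).mem_iff]
  exact List.getElem_mem _

variable [MeasurableSpace Ω] {Z : Fin n → Ω → ℝ}

lemma measurable_orderStat (hZ : ∀ i, Measurable (Z i)) {j : ℕ} (hj1 : 1 ≤ j) (hjn : j ≤ n) :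
    Measurable (orderStat Z j) := by
  refine measurable_of_Ioi fun z => ?_
  have hset : orderStat Z j ⁻¹' Set.Ioi z = {ω | #{i | Z i ω ≤ z} < j} :=
    Set.ext fun ω => lt_orderStat_iff Z hj1 hjn z ω
  rw [hset]
  refine measurableSet_lt ?_ measurable_const
  simp_rw [card_filter]
  exact Finset.measurable_sum _ fun i _ =>
    Measurable.ite ((hZ i) measurableSet_Iic) measurable_const measurable_const

lemma integrable_orderStat {μ : Measure Ω} (hZm : ∀ i, Measurable (Z i))
    (hZ : ∀ i, Integrable (Z i) μ) {j : ℕ} (hj1 : 1 ≤ j) (hjn : j ≤ n) :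
    Integrable (orderStat Z j) μ := by
  refine (integrable_finsetSum univ fun i _ => (hZ i).abs).mono'
    (measurable_orderStat hZm hj1 hjn).aestronglyMeasurable (ae_of_all _ fun ω => ?_)
  obtain ⟨i, hi⟩ := exists_orderStat_eq Z hj1 hjn ω
  rw [← hi, Real.norm_eq_abs]
  exact single_le_sum (f := fun i => |Z i ω|) (fun i _ => abs_nonneg _) (mem_univ i)

end OrderStat

section LayerCake

variable {α : Type*} [MeasurableSpace α] {μ : Measure α}

lemma MeasureTheory.Integrable.integrableOn_measureReal_lt_s7 {f : α → ℝ} (hf : Integrable f μ)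
    (hnn : 0 ≤ᵐ[μ] f) : IntegrableOn (fun x => μ.real {a | x < f a}) (Set.Ioi 0) := by
  have hanti : Antitone fun x => μ {a | x < f a} :=
    fun x y hxy => measure_mono fun a ha => hxy.trans_lt ha
  refine integrable_toReal_of_lintegral_ne_top hanti.measurable.aemeasurable ?_
  rw [← lintegral_eq_lintegral_meas_lt μ hnn hf.aemeasurable]
  exact hf.lintegral_lt_top.ne

lemma setIntegral_sub_eq_integral_measureReal_inter_lt [IsFiniteMeasure μ] {A : Set α}
    (hA : MeasurableSet A) {X : α → ℝ} (hX : Integrable X μ) {t : ℝ} (hXt : ∀ ω ∈ A, t ≤ X ω) :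
    ∫ ω in A, (X ω - t) ∂μ = ∫ z in Set.Ioi t, μ.real (A ∩ {ω | z < X ω}) := by
  have hnn : 0 ≤ᵐ[μ.restrict A] fun ω => X ω - t :=
    (ae_restrict_iff' hA).2 (ae_of_all _ fun ω hω => sub_nonneg.2 (hXt ω hω))
  have hint : Integrable (fun ω => X ω - t) (μ.restrict A) :=
    (hX.sub (integrable_const t)).restrict
  have hshift := (measurePreserving_add_right volume t).setIntegral_preimage_emb
    (measurableEmbedding_addRight t) (fun z => μ.real (A ∩ {ω | z < X ω})) (Set.Ioi t)
  rw [Set.preimage_add_const_Ioi, sub_self] at hshift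
  rw [hint.integral_eq_integral_meas_lt hnn, ← hshift]
  refine setIntegral_congr_fun measurableSet_Ioi fun s _ => ?_
  rw [measureReal_restrict_apply' hA, Set.inter_comm]
  simp_rw [lt_sub_iff_add_lt]

end LayerCake

lemma ProbabilityTheory.iIndepFun.measureReal_forall_mem {Ω ι : Type*} [MeasurableSpace Ω]
    {P : Measure Ω} [Fintype ι] {Z : ι → Ω → ℝ} (hindep : iIndepFun Z P) {s : ι → Set ℝ}
    (hs : ∀ i, MeasurableSet (s i)) :
    P.real {ω | ∀ i, Z i ω ∈ s i} = ∏ i, P.real {ω | Z i ω ∈ s i} := by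
  have hinter : {ω | ∀ i, Z i ω ∈ s i} = ⋂ i, Z i ⁻¹' s i := by ext; simp
  rw [hinter, measureReal_def, hindep.meas_iInter fun i => ⟨s i, hs i, rfl⟩, ENNReal.toReal_prod]
  rfl

section CDF

variable {Ω : Type*} [MeasurableSpace Ω] {P : Measure Ω} [IsProbabilityMeasure P] {F : ℝ → ℝ}

lemma measureReal_lt_eq_one_sub {X : Ω → ℝ} (hX : Measurable X)
    (hF : ∀ x, P.real {ω | X ω ≤ x} = F x) (x : ℝ) : P.real {ω | x < X ω} = 1 - F x := by
  rw [← hF, ← probReal_compl_eq_one_sub (s := {ω | X ω ≤ x}) (hX measurableSet_Iic)]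
  congr 1
  ext ω
  simp

lemma measureReal_mem_Ioc_eq_sub {X : Ω → ℝ} (hX : Measurable X)
    (hF : ∀ x, P.real {ω | X ω ≤ x} = F x) {a b : ℝ} (hab : a ≤ b) :
    P.real {ω | X ω ∈ Set.Ioc a b} = F b - F a := by
  rw [← hF, ← hF, ← measureReal_sdiff (s₁ := {ω | X ω ≤ b}) (s₂ := {ω | X ω ≤ a})
    (fun ω (h : X ω ≤ a) => h.trans hab) (hX measurableSet_Iic)]
  congr 1
  ext ω
  simp [and_comm]

lemma integrableOn_one_sub_pow {X : Ω → ℝ} (hX : Measurable X) (hXint : Integrable X P)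
    (hX0 : ∀ ω, 0 ≤ X ω) (hF : ∀ x, P.real {ω | X ω ≤ x} = F x) {t : ℝ} (ht : 0 ≤ t) {p : ℕ}
    (hp : 1 ≤ p) : IntegrableOn (fun z => (1 - F z) ^ p) (Set.Ioi t) := by
  simp_rw [← measureReal_lt_eq_one_sub hX hF]
  have htail := (hXint.integrableOn_measureReal_lt_s7 (ae_of_all _ hX0)).mono_set
    (Set.Ioi_subset_Ioi ht)
  have hanti : Antitone fun z => P.real {ω | z < X ω} :=
    fun x y hxy => measureReal_mono fun ω hω => hxy.trans_lt hω
  refine htail.mono' (hanti.measurable.pow_const p).aestronglyMeasurable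
    (ae_of_all _ fun z => ?_)
  rw [Real.norm_of_nonneg (by positivity)]
  exact pow_le_of_le_one measureReal_nonneg measureReal_le_one (by omega)

variable {ι : Type*} [Fintype ι] {Z : ι → Ω → ℝ}

lemma measureReal_forall_lt_eq_pow (hZ : ∀ i, Measurable (Z i)) (hindep : iIndepFun Z P)
    (hF : ∀ i x, P.real {ω | Z i ω ≤ x} = F x) (t : ℝ) :
    P.real {ω | ∀ i, t < Z i ω} = (1 - F t) ^ Fintype.card ι := by
  have h := hindep.measureReal_forall_mem (s := fun _ => Set.Ioi t) fun _ => measurableSet_Ioi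
  simp only [Set.mem_Ioi] at h
  simp_rw [h, measureReal_lt_eq_one_sub (hZ _) (hF _), prod_const, card_univ]

lemma measureReal_forall_mem_ite_Ioc_Ioi [DecidableEq ι] (hZ : ∀ i, Measurable (Z i))
    (hindep : iIndepFun Z P) (hF : ∀ i x, P.real {ω | Z i ω ≤ x} = F x) {t z : ℝ} (htz : t ≤ z)
    (S : Finset ι) :
    P.real {ω | ∀ i, Z i ω ∈ if i ∈ S then Set.Ioc t z else Set.Ioi z}
      = (F z - F t) ^ #S * (1 - F z) ^ (Fintype.card ι - #S) := by
  rw [hindep.measureReal_forall_mem fun i => by split_ifs <;> measurability]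
  have hfactor : ∀ i, P.real {ω | Z i ω ∈ if i ∈ S then Set.Ioc t z else Set.Ioi z}
      = if i ∈ S then F z - F t else 1 - F z := fun i => by
    split_ifs
    · exact measureReal_mem_Ioc_eq_sub (hZ i) (hF i) htz
    · exact measureReal_lt_eq_one_sub (hZ i) (hF i) z
  simp_rw [hfactor]
  rw [prod_ite, prod_const, prod_const, filter_univ_mem, ← card_compl]
  congr 3
  ext i
  simp

lemma measureReal_forall_lt_and_card_le_lt (hZ : ∀ i, Measurable (Z i))
    (hindep : iIndepFun Z P) (hF : ∀ i x, P.real {ω | Z i ω ≤ x} = F x) {t z : ℝ} (htz : t ≤ z)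
    (j : ℕ) :
    P.real {ω | (∀ i, t < Z i ω) ∧ #{i | Z i ω ≤ z} < j}
      = ∑ m ∈ range j, ((Fintype.card ι).choose m : ℝ)
          * ((F z - F t) ^ m * (1 - F z) ^ (Fintype.card ι - m)) := by
  classical
  set E : Finset ι → Set Ω :=
    fun S => {ω | ∀ i, Z i ω ∈ if i ∈ S then Set.Ioc t z else Set.Ioi z}
  have hE : ∀ S ω, ω ∈ E S ↔ (∀ i, t < Z i ω) ∧ ({i | Z i ω ≤ z} : Finset ι) = S :=
    fun S _ => forall_mem_ite_Ioc_Ioi_iff htz S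
  have hunion : {ω | (∀ i, t < Z i ω) ∧ #{i | Z i ω ≤ z} < j}
      = ⋃ S ∈ ({S | #S < j} : Finset (Finset ι)), E S := by
    ext ω
    simp only [Set.mem_ofPred_eq, Set.mem_iUnion, mem_filter, mem_univ, true_and, hE,
      exists_prop]
    grind
  have hdisj : (({S | #S < j} : Finset (Finset ι)) : Set (Finset ι)).PairwiseDisjoint E :=
    fun S _ T _ hST => Set.disjoint_left.2 fun ω hS hT =>
      hST (((hE S ω).1 hS).2.symm.trans ((hE T ω).1 hT).2)
  have hmeas : ∀ S ∈ ({S | #S < j} : Finset (Finset ι)), MeasurableSet (E S) := fun S _ => by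
    simp only [E, Set.ofPred_forall]
    exact .iInter fun i => hZ i (by split_ifs <;> measurability)
  rw [hunion, measureReal_biUnion_finset hdisj hmeas]
  simp only [E, measureReal_forall_mem_ite_Ioc_Ioi hZ hindep hF htz]
  rw [sum_filter_card_lt (fun m => (F z - F t) ^ m * (1 - F z) ^ (Fintype.card ι - m))]
  simp [nsmul_eq_mul]

end CDF

lemma integral_sum_choose_div_one_sub_pow {F : ℝ → ℝ} {t : ℝ}
    (hF : ∀ p, 1 ≤ p → IntegrableOn (fun z => (1 - F z) ^ p) (Set.Ioi t)) (hFt : 1 - F t ≠ 0)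
    {n j : ℕ} (hjn : j ≤ n) :
    (∫ z in Set.Ioi t, ∑ m ∈ range j, (n.choose m : ℝ) * ((F z - F t) ^ m * (1 - F z) ^ (n - m)))
        / (1 - F t) ^ n
      = ∑ m ∈ range j, ∑ i ∈ range (m + 1), (n.choose m : ℝ) * (m.choose i) * (-1 : ℝ) ^ i *
          (∫ z in Set.Ioi t, (1 - F z) ^ (n - m + i)) / (1 - F t) ^ (n - m + i) := by
  have hexpand : ∀ z, ∑ m ∈ range j, (n.choose m : ℝ) * ((F z - F t) ^ m * (1 - F z) ^ (n - m))
      = ∑ m ∈ range j, ∑ i ∈ range (m + 1), (n.choose m : ℝ) * (m.choose i) * (-1 : ℝ) ^ i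
          * (1 - F t) ^ (m - i) * (1 - F z) ^ (n - m + i) := fun z => by
    refine sum_congr rfl fun m _ => ?_
    rw [show F z - F t = (1 - F t) - (1 - F z) by ring, sub_pow_mul_pow_eq_sum, mul_sum]
    exact sum_congr rfl fun i _ => by ring
  have hint : ∀ m ∈ range j, ∀ i ∈ range (m + 1), IntegrableOn (fun z => (n.choose m : ℝ)
      * (m.choose i) * (-1 : ℝ) ^ i * (1 - F t) ^ (m - i) * (1 - F z) ^ (n - m + i)) (Set.Ioi t) :=
    fun m hm i _ => (hF _ (by rw [mem_range] at hm; omega)).const_mul _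
  simp_rw [hexpand]
  rw [integral_finsetSum _ fun m hm => integrable_finsetSum _ (hint m hm), sum_div]
  refine sum_congr rfl fun m hm => ?_
  rw [integral_finsetSum _ (hint m hm), sum_div]
  refine sum_congr rfl fun i hi => ?_
  rw [mem_range] at hm hi
  rw [integral_const_mul, show (1 - F t) ^ n = (1 - F t) ^ (m - i) * (1 - F t) ^ (n - m + i) by
    rw [← pow_add]; congr 1; omega]
  field_simp

theorem mrl_order_statistic_given_min_iid_general
    {Ω : Type*} [MeasurableSpace Ω] (P : Measure Ω) [IsProbabilityMeasure P]
    (n k : ℕ) (hk1 : 1 ≤ k) (hkn : k ≤ n)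
    (Z : Fin n → Ω → ℝ) (hZm : ∀ i, Measurable (Z i))
    (hZint : ∀ i, Integrable (Z i) P)
    (hZ0 : ∀ i ω, 0 ≤ Z i ω)
    (hindep : iIndepFun Z P)
    (F : ℝ → ℝ)
    (hFcdf : ∀ i x, (P {ω | Z i ω ≤ x}).toReal = F x)
    (t : ℝ) (ht : 0 ≤ t) (hFt : 0 < 1 - F t) :
    (∫ ω in {ω | t < orderStat Z 1 ω}, (orderStat Z (n - k + 1) ω - t) ∂P)
        / (P {ω | t < orderStat Z 1 ω}).toReal
      = ∑ m ∈ Finset.range (n - k + 1), ∑ i ∈ Finset.range (m + 1),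
          (n.choose m : ℝ) * (m.choose i) * (-1 : ℝ) ^ i *
            (∫ z in Set.Ioi t, (1 - F z) ^ (n - m + i)) / (1 - F t) ^ (n - m + i) := by
  have hn : 1 ≤ n := hk1.trans hkn
  have hj1 : 1 ≤ n - k + 1 := Nat.le_add_left 1 _
  have hjn : n - k + 1 ≤ n := by omega
  have hmin : {ω | t < orderStat Z 1 ω} = {ω | ∀ i, t < Z i ω} :=
    Set.ext fun ω => lt_orderStat_one_iff Z hn t ω
  have hnum : ∫ ω in {ω | t < orderStat Z 1 ω}, (orderStat Z (n - k + 1) ω - t) ∂P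
      = ∫ z in Set.Ioi t, ∑ m ∈ range (n - k + 1),
          (n.choose m : ℝ) * ((F z - F t) ^ m * (1 - F z) ^ (n - m)) := by
    rw [setIntegral_sub_eq_integral_measureReal_inter_lt
      (measurableSet_lt measurable_const (measurable_orderStat hZm le_rfl hn))
      (integrable_orderStat hZm hZint hj1 hjn)
      fun ω hω => hω.le.trans (orderStat_one_le Z hj1 hjn ω)]
    refine setIntegral_congr_fun measurableSet_Ioi fun z hz => ?_
    have hevent : {ω | t < orderStat Z 1 ω} ∩ {ω | z < orderStat Z (n - k + 1) ω}
        = {ω | (∀ i, t < Z i ω) ∧ #{i | Z i ω ≤ z} < n - k + 1} := by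
      rw [hmin]
      ext ω
      exact and_congr_right' (lt_orderStat_iff Z hj1 hjn z ω)
    rw [hevent, measureReal_forall_lt_and_card_le_lt hZm hindep hFcdf hz.le, Fintype.card_fin]
  rw [hnum, ← measureReal_def, hmin, measureReal_forall_lt_eq_pow hZm hindep hFcdf,
    Fintype.card_fin]
  exact integral_sum_choose_div_one_sub_pow
    (fun p hp => integrableOn_one_sub_pow (hZm ⟨0, hn⟩) (hZint _) (hZ0 _) (hFcdf _) ht hp)
    hFt.ne' hjn

theorem mrl_order_statistic_given_min_iid
    {Ω : Type*} [MeasurableSpace Ω] (P : Measure Ω) [IsProbabilityMeasure P]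
    (n k : ℕ) (hn : 1 ≤ n) (hk1 : 1 ≤ k) (hkn : k ≤ n)
    (Z : Fin n → Ω → ℝ) (hZm : ∀ i, Measurable (Z i))
    (hZint : ∀ i, Integrable (Z i) P)
    (hZ0 : ∀ i ω, 0 ≤ Z i ω)
    (hindep : iIndepFun Z P)
    (F : ℝ → ℝ)
    (hFcdf : ∀ i x, (P {ω | Z i ω ≤ x}).toReal = F x)
    (t : ℝ) (ht : 0 ≤ t) (hFt : 0 < 1 - F t) :
    (∫ ω in {ω | t < orderStat Z 1 ω}, (orderStat Z (n - k + 1) ω - t) ∂P)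
        / (P {ω | t < orderStat Z 1 ω}).toReal
      = ∑ m ∈ Finset.range (n - k + 1), ∑ i ∈ Finset.range (m + 1),
          (n.choose m : ℝ) * (m.choose i) * (-1 : ℝ) ^ i *
            (∫ z in Set.Ioi t, (1 - F z) ^ (n - m + i)) / (1 - F t) ^ (n - m + i) :=
  mrl_order_statistic_given_min_iid_general P n k hk1 hkn Z hZm hZint hZ0 hindep F hFcdf t ht hFt
end
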